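/- For every 3CNF formula φ = C1 ∧ ⋯ ∧ Cm over Boolean variables x1,…,xn, with a fixed letter a ∈ Σ, define βi := ((xi{ε}·a) ∨ xi{a}) for 1 ≤ i ≤ n and γ1 := β1·⋯·βn; for each clause Ci with literal variable indices i1 < i2 < i3, define γ2^i := β1⋯β_{i1−1}·δ_{i1}·β_{i1+1}⋯β_{i2−1}·δ_{i2}·β_{i2+1}⋯β_{i3−1}·δ_{i3}·β_{i3+1}⋯βn, where δℓ := (xℓ{ε}·a) if xℓ occurs positively in Ci and δℓ := xℓ{a} if ¬xℓ occurs in Ci, and define γ2 := γ2^1 ∨ ⋯ ∨ γ2^m. Then γ1 and γ2 are functional regex formulas with Vars(γ1) = Vars(γ2) = {x1,…,xn}, and ⟦γ1 ∖ γ2⟧(a^n) ≠ ∅ if and only if φ is satisfiable. -/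

import Mathlib

/-!
On the document `aⁿ` every `βᵢ` reads exactly the `i`-th letter and binds `xᵢ` either to the
empty span in front of it (`false`) or to the letter itself (`true`). Hence `⟦γ1⟧(aⁿ)` is the set
of encodings `μ_τ` of all assignments `τ`, while `δℓ` admits only the value that makes its literal
false, so `⟦γ2^j⟧(aⁿ)` consists of the encodings of the assignments falsifying `C_j`. Two encodings
are compatible only if they are equal, so `μ_τ` survives the difference iff `τ` falsifies no clause.
-/

namespace Spanners

open scoped Classical

/-! ### Spans and mappings -/

abbrev Span := ℕ × ℕ

abbrev VMapping := ℕ → Option Span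

def emptyMapping : VMapping := fun _ => none

def mapDom (μ : VMapping) : Set ℕ := {x | μ x ≠ none}

/-- Two mappings are compatible if they agree on every common variable. -/
def Compatible (μ1 μ2 : VMapping) : Prop :=
  ∀ x s1 s2, μ1 x = some s1 → μ2 x = some s2 → s1 = s2

def DisjointDom (μ1 μ2 : VMapping) : Prop :=
  ∀ x, μ1 x = none ∨ μ2 x = none

def munion (μ1 μ2 : VMapping) : VMapping := fun x =>
  match μ1 x with
  | some s => some s
  | none => μ2 x

def minsert (x : ℕ) (s : Span) (μ : VMapping) : VMapping :=
  fun y => if y = x then some s else μ y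

/-- Natural join of two sets of mappings. -/
def joinSet (S1 S2 : Set VMapping) : Set VMapping :=
  {μ | ∃ μ1 ∈ S1, ∃ μ2 ∈ S2, Compatible μ1 μ2 ∧ μ = munion μ1 μ2}

/-- Difference of two sets of mappings. -/
def diffSet (S1 S2 : Set VMapping) : Set VMapping :=
  {μ1 | μ1 ∈ S1 ∧ ∀ μ2 ∈ S2, ¬ Compatible μ1 μ2}

/-- Restriction of a mapping to a set of variables. -/
noncomputable def restrictMap (μ : VMapping) (V : Set ℕ) : VMapping :=
  fun x => if x ∈ V then μ x else none

/-- Projection of a set of mappings to a set of variables. -/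
def projSet (V : Set ℕ) (S : Set VMapping) : Set VMapping :=
  {μ' | ∃ μ ∈ S, μ' = restrictMap μ V}

/-! ### Regex formulas -/

inductive RGX (Sig : Type) where
  | empty : RGX Sig
  | eps : RGX Sig
  | letter : Sig → RGX Sig
  | union : RGX Sig → RGX Sig → RGX Sig
  | concat : RGX Sig → RGX Sig → RGX Sig
  | star : RGX Sig → RGX Sig
  | bind : ℕ → RGX Sig → RGX Sig

variable {Sig : Type}

def RGX.vars : RGX Sig → Finset ℕ
  | .empty => ∅
  | .eps => ∅
  | .letter _ => ∅
  | .union a b => a.vars ∪ b.vars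
  | .concat a b => a.vars ∪ b.vars
  | .star a => a.vars
  | .bind x a => insert x a.vars

def RGX.size : RGX Sig → ℕ
  | .empty => 1
  | .eps => 1
  | .letter _ => 1
  | .union a b => a.size + b.size + 1
  | .concat a b => a.size + b.size + 1
  | .star a => a.size + 1
  | .bind _ a => a.size + 1

/-- The schemaless semantics `⟨α⟩(d)`: `RMatch α d i j μ` means `([i,j⟩, μ) ∈ ⟨α⟩(d)`. -/
inductive RMatch : RGX Sig → List Sig → ℕ → ℕ → VMapping → Prop where
  | eps {d : List Sig} {i : ℕ} (h1 : 1 ≤ i) (h2 : i ≤ d.length + 1) :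
      RMatch .eps d i i emptyMapping
  | letter {d : List Sig} {i : ℕ} {σ : Sig} (h1 : 1 ≤ i) (h2 : d[i - 1]? = some σ) :
      RMatch (.letter σ) d i (i + 1) emptyMapping
  | unionL {a b : RGX Sig} {d : List Sig} {i j : ℕ} {μ : VMapping}
      (h : RMatch a d i j μ) : RMatch (.union a b) d i j μ
  | unionR {a b : RGX Sig} {d : List Sig} {i j : ℕ} {μ : VMapping}
      (h : RMatch b d i j μ) : RMatch (.union a b) d i j μ
  | concat {a b : RGX Sig} {d : List Sig} {i k j : ℕ} {μ1 μ2 : VMapping}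
      (h1 : RMatch a d i k μ1) (h2 : RMatch b d k j μ2) (hd : DisjointDom μ1 μ2) :
      RMatch (.concat a b) d i j (munion μ1 μ2)
  | bind {x : ℕ} {a : RGX Sig} {d : List Sig} {i j : ℕ} {μ : VMapping}
      (h : RMatch a d i j μ) (hx : μ x = none) :
      RMatch (.bind x a) d i j (minsert x (i, j) μ)
  | starNil {a : RGX Sig} {d : List Sig} {i : ℕ} (h1 : 1 ≤ i) (h2 : i ≤ d.length + 1) :
      RMatch (.star a) d i i emptyMapping
  | starCons {a : RGX Sig} {d : List Sig} {i k j : ℕ} {μ1 μ2 : VMapping}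
      (h1 : RMatch a d i k μ1) (h2 : RMatch (.star a) d k j μ2) (hd : DisjointDom μ1 μ2) :
      RMatch (.star a) d i j (munion μ1 μ2)

/-- `⟦α⟧(d)`: mappings extracted with the full span. -/
def rgxSem (α : RGX Sig) (d : List Sig) : Set VMapping :=
  {μ | RMatch α d 1 (d.length + 1) μ}

/-- Sequential regex formulas. -/
def RGX.Sequential : RGX Sig → Prop
  | .empty => True
  | .eps => True
  | .letter _ => True
  | .union a b => a.Sequential ∧ b.Sequential
  | .concat a b => a.Sequential ∧ b.Sequential ∧ Disjoint a.vars b.vars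
  | .star a => a.Sequential ∧ a.vars = ∅
  | .bind x a => a.Sequential ∧ x ∉ a.vars

/-- Variable-free words over the alphabet (built from ε, letters and concatenation). -/
inductive RGX.IsWord : RGX Sig → Prop where
  | eps : RGX.IsWord .eps
  | letter (σ : Sig) : RGX.IsWord (.letter σ)
  | concat {a b : RGX Sig} : a.IsWord → b.IsWord → RGX.IsWord (.concat a b)

/-- Functional for a set `V` of variables. -/
inductive FunctionalFor : RGX Sig → Finset ℕ → Prop where
  | word {α : RGX Sig} (h : α.IsWord) : FunctionalFor α ∅
  | union {a b : RGX Sig} {V : Finset ℕ} (ha : FunctionalFor a V) (hb : FunctionalFor b V) :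
      FunctionalFor (.union a b) V
  | concat {a b : RGX Sig} {V : Finset ℕ} (V1 : Finset ℕ) (hsub : V1 ⊆ V)
      (ha : FunctionalFor a V1) (hb : FunctionalFor b (V \ V1)) :
      FunctionalFor (.concat a b) V
  | star {a : RGX Sig} (h : FunctionalFor a ∅) : FunctionalFor (.star a) ∅
  | bind {x : ℕ} {a : RGX Sig} {V : Finset ℕ} (h : FunctionalFor a (V.erase x)) :
      FunctionalFor (.bind x a) V

def RGX.Functional (α : RGX Sig) : Prop := FunctionalFor α α.vars

/-- Disjunctive functional regex formulas: finite disjunctions of functional regex formulas. -/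
inductive DisjFunctional : RGX Sig → Prop where
  | base {γ : RGX Sig} (h : γ.Functional) : DisjFunctional γ
  | union {a b : RGX Sig} (ha : DisjFunctional a) (hb : DisjFunctional b) :
      DisjFunctional (.union a b)

/-- Number of disjuncts of a (disjunctive) regex formula. -/
def countDisjuncts : RGX Sig → ℕ
  | .union a b => countDisjuncts a + countDisjuncts b
  | _ => 1

/-- Disjunction-free regex formulas. -/
def RGX.DisjFree : RGX Sig → Prop
  | .union _ _ => False
  | .concat a b => a.DisjFree ∧ b.DisjFree
  | .star a => a.DisjFree
  | .bind _ a => a.DisjFree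
  | _ => True

/-- `γ` is synchronized for `x`: no subformula `γ1 ∨ γ2` contains `x`. -/
def RGX.SyncFor : RGX Sig → ℕ → Prop
  | .union a b, x => (x ∉ a.vars ∧ x ∉ b.vars) ∧ a.SyncFor x ∧ b.SyncFor x
  | .concat a b, x => a.SyncFor x ∧ b.SyncFor x
  | .star a, x => a.SyncFor x
  | .bind _ a, x => a.SyncFor x
  | _, _ => True

/-- Concatenation of a list of regex formulas. -/
def concatList : List (RGX Sig) → RGX Sig
  | [] => .eps
  | [α] => α
  | α :: rest => .concat α (concatList rest)

/-- Disjunction of a list of regex formulas. -/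
def disjList : List (RGX Sig) → RGX Sig
  | [] => .empty
  | [α] => α
  | α :: rest => .union α (disjList rest)

/-! ### vset-automata -/

inductive VLabel (Sig : Type) where
  | eps : VLabel Sig
  | letter : Sig → VLabel Sig
  | openv : ℕ → VLabel Sig
  | closev : ℕ → VLabel Sig
deriving DecidableEq

structure VA (Sig : Type) [DecidableEq Sig] where
  q0 : ℕ
  F : Finset ℕ
  δ : Finset (ℕ × VLabel Sig × ℕ)

variable [DecidableEq Sig]

/-- The states of a VA: the initial state and all states mentioned in `F` or in transitions. -/
def statesOf (A : VA Sig) : Finset ℕ :=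
  insert A.q0 (A.F ∪ A.δ.image (fun t => t.1) ∪ A.δ.image (fun t => t.2.2))

def labelVars : VLabel Sig → Finset ℕ
  | .openv x => {x}
  | .closev x => {x}
  | _ => ∅

/-- `Vars(A)`: the variables mentioned in the transitions of `A`. -/
def varsOf (A : VA Sig) : Finset ℕ := A.δ.biUnion (fun t => labelVars t.2.1)

/-- Total size of a VA: number of states plus number of transitions. -/
def vaSize (A : VA Sig) : ℕ := (statesOf A).card + A.δ.card

/-- `A.PathFrom p ls q`: a path (run segment) from `p` to `q` with label sequence `ls`. -/
inductive VA.PathFrom (A : VA Sig) : ℕ → List (VLabel Sig) → ℕ → Prop where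
  | nil (q : ℕ) : VA.PathFrom A q [] q
  | cons {p q r : ℕ} {l : VLabel Sig} {ls : List (VLabel Sig)}
      (h : (p, l, q) ∈ A.δ) (htail : VA.PathFrom A q ls r) : VA.PathFrom A p (l :: ls) r

/-- The word (document) read by a sequence of labels. -/
def readWord : List (VLabel Sig) → List Sig :=
  List.filterMap fun l => match l with
    | VLabel.letter σ => some σ
    | _ => none

def isLetterL : VLabel Sig → Bool
  | .letter _ => true
  | _ => false

/-- The current position in the document just before executing the `k`-th label. -/
def posAt (ls : List (VLabel Sig)) (k : ℕ) : ℕ := 1 + (ls.take k).countP isLetterL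

/-- Validity of a run, given by its label sequence. -/
def ValidLabels (ls : List (VLabel Sig)) : Prop :=
  ∀ x : ℕ,
    ls.count (VLabel.openv x) ≤ 1 ∧
    ls.count (VLabel.closev x) ≤ 1 ∧
    ((VLabel.openv x) ∈ ls ↔ (VLabel.closev x) ∈ ls) ∧
    ∀ i j : ℕ, ls[i]? = some (VLabel.openv x) → ls[j]? = some (VLabel.closev x) →
      posAt ls i ≤ posAt ls j

/-- The mapping `μ_ρ` extracted from a (valid accepting) run with label sequence `ls`. -/
def runMapping (ls : List (VLabel Sig)) : VMapping := fun x =>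
  if (VLabel.openv x) ∈ ls then
    some (posAt ls (ls.idxOf (VLabel.openv x)), posAt ls (ls.idxOf (VLabel.closev x)))
  else none

/-- `ls` is the label sequence of an accepting run of `A`. -/
def AcceptsWith (A : VA Sig) (ls : List (VLabel Sig)) : Prop :=
  ∃ qf, VA.PathFrom A A.q0 ls qf ∧ qf ∈ A.F

/-- `⟦A⟧(d)`. -/
def vaSem (A : VA Sig) (d : List Sig) : Set VMapping :=
  {μ | ∃ ls, AcceptsWith A ls ∧ readWord ls = d ∧ ValidLabels ls ∧ μ = runMapping ls}

/-- A VA is sequential if all of its accepting runs are valid. -/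
def VA.Sequential (A : VA Sig) : Prop := ∀ ls, AcceptsWith A ls → ValidLabels ls

/-- A run from the initial state to `q` that is a prefix of an accepting run. -/
def PrefixRun (A : VA Sig) (ls : List (VLabel Sig)) (q : ℕ) : Prop :=
  VA.PathFrom A A.q0 ls q ∧ ∃ ls' qf, VA.PathFrom A q ls' qf ∧ qf ∈ A.F

/-- `A` is semi-functional for the variable `x`: no state has extended configuration `d`. -/
def SemiFunctionalFor (A : VA Sig) (x : ℕ) : Prop :=
  ¬ ∃ q ls1 ls2, PrefixRun A ls1 q ∧ PrefixRun A ls2 q ∧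
      (VLabel.closev x) ∈ ls1 ∧ (VLabel.openv x) ∉ ls2

def SemiFunctionalForSet (A : VA Sig) (X : Finset ℕ) : Prop :=
  ∀ x ∈ X, SemiFunctionalFor A x

/-- Functional VA: sequential, and every accepting run opens and closes every variable. -/
def FunctionalVA (A : VA Sig) : Prop :=
  A.Sequential ∧ ∀ ls, AcceptsWith A ls → ∀ x ∈ varsOf A,
    (VLabel.openv x) ∈ ls ∧ (VLabel.closev x) ∈ ls

/-- `l` has a unique target state in `A`. -/
def UniqueTarget (A : VA Sig) (l : VLabel Sig) : Prop :=
  ∃ qt : ℕ, ∀ p q : ℕ, (p, l, q) ∈ A.δ → q = qt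

/-- `A` is synchronized for the variable `x`. -/
def SyncForVA (A : VA Sig) (x : ℕ) : Prop :=
  UniqueTarget A (VLabel.openv x) ∧ UniqueTarget A (VLabel.closev x) ∧
    ((∀ ls, AcceptsWith A ls → (VLabel.openv x) ∈ ls ∧ (VLabel.closev x) ∈ ls) ∨
     (∀ ls, AcceptsWith A ls → (VLabel.openv x) ∉ ls ∧ (VLabel.closev x) ∉ ls))

/-- `A` is the disjunctive functional VA with functional components `parts`. -/
def DisjFunctionalVAWith (A : VA Sig) (parts : List (VA Sig)) : Prop :=
  (∀ B ∈ parts, FunctionalVA B) ∧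
  (parts.Pairwise fun B C => Disjoint (statesOf B) (statesOf C)) ∧
  (∀ B ∈ parts, A.q0 ∉ statesOf B) ∧
  A.F = parts.foldr (fun B s => B.F ∪ s) (∅ : Finset ℕ) ∧
  A.δ = (parts.map (fun B => (A.q0, (VLabel.eps : VLabel Sig), B.q0))).toFinset
        ∪ parts.foldr (fun B s => B.δ ∪ s) (∅ : Finset (ℕ × VLabel Sig × ℕ))

def DisjFunctionalVA (A : VA Sig) : Prop := ∃ parts, DisjFunctionalVAWith A parts

/-! ### 3CNF formulas -/

/-- A 3CNF clause over `n` Boolean variables: a triple of literals; `(i, true)` is `xᵢ`,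
`(i, false)` is `¬xᵢ`. -/
def Clause3 (n : ℕ) : Type := (Fin n × Bool) × (Fin n × Bool) × (Fin n × Bool)

def litsOf {n : ℕ} (c : Clause3 n) : List (Fin n × Bool) := [c.1, c.2.1, c.2.2]

def clauseSat {n : ℕ} (τ : Fin n → Bool) (c : Clause3 n) : Prop :=
  ∃ l ∈ litsOf c, τ l.1 = l.2

def Sat3 {n m : ℕ} (φ : Fin m → Clause3 n) : Prop :=
  ∃ τ : Fin n → Bool, ∀ j, clauseSat τ (φ j)

end Spanners

namespace Spanners

variable {Sig : Type}

/-- `β_i := (x_i{ε}·a) ∨ x_i{a}`. -/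
def betaS1 (a : Sig) (i : ℕ) : RGX Sig :=
  .union (.concat (.bind i .eps) (.letter a)) (.bind i (.letter a))

/-- `γ1 := β1·⋯·βn`. -/
def gamma1S1 (a : Sig) (n : ℕ) : RGX Sig :=
  concatList (List.ofFn fun i : Fin n => betaS1 a (i : ℕ))

/-- `δ_ℓ := x_ℓ{ε}·a` if `x_ℓ` occurs positively, `x_ℓ{a}` if it occurs negatively. -/
def deltaS1 (a : Sig) (i : ℕ) (pos : Bool) : RGX Sig :=
  if pos then .concat (.bind i .eps) (.letter a) else .bind i (.letter a)

/-- `γ2^i`: obtained from `γ1` by replacing `β_ℓ` with `δ_ℓ` at the positions of the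
literals of clause `C_i`. -/
def gamma2iS1 (a : Sig) {n : ℕ} (c : Clause3 n) : RGX Sig :=
  concatList (List.ofFn fun i : Fin n =>
    match (litsOf c).find? (fun l => decide (l.1 = i)) with
    | some l => deltaS1 a (i : ℕ) l.2
    | none => betaS1 a (i : ℕ))

/-- `γ2 := γ2^1 ∨ ⋯ ∨ γ2^m`. -/
def gamma2S1 (a : Sig) {n m : ℕ} (φ : Fin m → Clause3 n) : RGX Sig :=
  disjList (List.ofFn fun j : Fin m => gamma2iS1 a (φ j))

section Regex

variable {α β : RGX Sig} {d : List Sig} {i j : ℕ} {μ : VMapping} {V V₁ V₂ : Finset ℕ}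

lemma munion_emptyMapping (μ : VMapping) : munion μ emptyMapping = μ := by
  funext x
  unfold munion
  cases μ x <;> rfl

lemma compatible_refl (μ : VMapping) : Compatible μ μ := fun _ _ _ h1 h2 =>
  Option.some.inj (h1.symm.trans h2)

lemma RMatch.bounds (h : RMatch α d i j μ) : 1 ≤ i ∧ i ≤ j ∧ j ≤ d.length + 1 := by
  induction h with
  | eps h1 h2 | starNil h1 h2 => exact ⟨h1, le_rfl, h2⟩
  | letter h1 h2 =>
      have := (List.getElem?_eq_some_iff.mp h2).1
      omega
  | unionL _ ih | unionR _ ih | bind _ _ ih => exact ih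
  | concat _ _ _ ih1 ih2 | starCons _ _ _ ih1 ih2 => omega

lemma rmatch_eps_iff :
    RMatch .eps d i j μ ↔ 1 ≤ i ∧ i ≤ d.length + 1 ∧ j = i ∧ μ = emptyMapping := by
  constructor
  · rintro ⟨h1, h2⟩
    exact ⟨h1, h2, rfl, rfl⟩
  · rintro ⟨h1, h2, rfl, rfl⟩
    exact .eps h1 h2

lemma rmatch_union_iff :
    RMatch (.union α β) d i j μ ↔ RMatch α d i j μ ∨ RMatch β d i j μ := by
  constructor
  · intro h
    cases h with
    | unionL h => exact .inl h
    | unionR h => exact .inr h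
  · rintro (h | h)
    exacts [.unionL h, .unionR h]

lemma rmatch_concat_iff :
    RMatch (.concat α β) d i j μ ↔ ∃ k μ₁ μ₂, RMatch α d i k μ₁ ∧ RMatch β d k j μ₂ ∧
      DisjointDom μ₁ μ₂ ∧ μ = munion μ₁ μ₂ := by
  constructor
  · intro h
    cases h with
    | concat h1 h2 hd => exact ⟨_, _, _, h1, h2, hd, rfl⟩
  · rintro ⟨k, μ₁, μ₂, h1, h2, hd, rfl⟩
    exact .concat h1 h2 hd

lemma rmatch_bind_iff {x : ℕ} :
    RMatch (.bind x α) d i j μ ↔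
      ∃ μ', RMatch α d i j μ' ∧ μ' x = none ∧ μ = minsert x (i, j) μ' := by
  constructor
  · intro h
    cases h with
    | bind h hx => exact ⟨_, h, hx, rfl⟩
  · rintro ⟨μ', h, hx, rfl⟩
    exact .bind h hx

lemma rmatch_concatList_cons {L : List (RGX Sig)} :
    RMatch (concatList (α :: L)) d i j μ ↔ ∃ k μ₁ μ₂, RMatch α d i k μ₁ ∧
      RMatch (concatList L) d k j μ₂ ∧ DisjointDom μ₁ μ₂ ∧ μ = munion μ₁ μ₂ := by
  cases L with
  | cons β L => exact rmatch_concat_iff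
  | nil =>
      simp only [concatList, rmatch_eps_iff]
      constructor
      · intro h
        obtain ⟨h1, h2, h3⟩ := h.bounds
        exact ⟨j, μ, emptyMapping, h, ⟨by omega, h3, rfl, rfl⟩, fun _ => .inr rfl,
          (munion_emptyMapping μ).symm⟩
      · rintro ⟨k, μ₁, μ₂, h, ⟨-, -, rfl, rfl⟩, -, rfl⟩
        rwa [munion_emptyMapping]

lemma rmatch_disjList :
    ∀ {L : List (RGX Sig)}, RMatch (disjList L) d i j μ ↔ ∃ α ∈ L, RMatch α d i j μ
  | [] => by simp only [disjList, List.not_mem_nil, false_and, exists_false, iff_false]; nofun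
  | [α] => by simp [disjList]
  | α :: β :: L => by
      rw [List.exists_mem_cons_iff, ← rmatch_disjList]
      exact rmatch_union_iff

lemma mem_rgxSem_disjList {L : List (RGX Sig)} :
    μ ∈ rgxSem (disjList L) d ↔ ∃ α ∈ L, μ ∈ rgxSem α d :=
  rmatch_disjList

lemma vars_concatList_cons {L : List (RGX Sig)} :
    (concatList (α :: L)).vars = α.vars ∪ (concatList L).vars := by
  cases L with
  | nil => simp [concatList, RGX.vars]
  | cons β L => rfl

lemma vars_disjList :
    ∀ {L : List (RGX Sig)}, L ≠ [] → (∀ α ∈ L, α.vars = V) → (disjList L).vars = V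
  | [α], _, h => h α (List.mem_singleton_self α)
  | α :: β :: L, _, h => by
      change α.vars ∪ (disjList (β :: L)).vars = V
      rw [h α List.mem_cons_self,
        vars_disjList (List.cons_ne_nil β L) fun γ hγ => h γ (List.mem_cons_of_mem α hγ),
        Finset.union_self]

lemma FunctionalFor.eq_empty_of_eps (h : FunctionalFor (.eps : RGX Sig) V) :
    V = ∅ := by
  cases h
  rfl

lemma FunctionalFor.concat_of_disjoint
    (hα : FunctionalFor α V₁) (hβ : FunctionalFor β V₂) (h : Disjoint V₁ V₂) :
    FunctionalFor (.concat α β) (V₁ ∪ V₂) :=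
  .concat V₁ Finset.subset_union_left hα (by rwa [Finset.union_sdiff_cancel_left h])

lemma FunctionalFor.concatList_cons {L : List (RGX Sig)}
    (hα : FunctionalFor α V₁) (hL : FunctionalFor (concatList L) V₂) (h : Disjoint V₁ V₂) :
    FunctionalFor (concatList (α :: L)) (V₁ ∪ V₂) := by
  cases L with
  | nil => rwa [hL.eq_empty_of_eps, Finset.union_empty]
  | cons β L => exact hα.concat_of_disjoint hL h

lemma FunctionalFor.disjList :
    ∀ {L : List (RGX Sig)}, L ≠ [] → (∀ α ∈ L, FunctionalFor α V) →
      FunctionalFor (disjList L) V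
  | [α], _, h => h α (List.mem_singleton_self α)
  | α :: β :: L, _, h => .union (h α List.mem_cons_self)
      (FunctionalFor.disjList (List.cons_ne_nil β L) fun γ hγ => h γ (List.mem_cons_of_mem α hγ))

lemma FunctionalFor.bind_singleton {k : ℕ} (h : α.IsWord) :
    FunctionalFor (.bind k α) {k} :=
  .bind (by rw [Finset.erase_singleton]; exact .word h)

end Regex

lemma _root_.List.find?_eq_some_of_nodup_map {α β : Type*} [DecidableEq β] {f : α → β}
    {L : List α} (hL : (L.map f).Nodup) {x : α} (hx : x ∈ L) :
    L.find? (fun y => decide (f y = f x)) = some x := by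
  induction L with
  | nil => cases hx
  | cons y L ih =>
      rw [List.map_cons, List.nodup_cons] at hL
      rcases List.mem_cons.mp hx with rfl | hx
      · exact List.find?_cons_of_pos (by simp)
      · have hyx : f y ≠ f x := fun h => hL.1 (h ▸ List.mem_map_of_mem hx)
        rw [List.find?_cons_of_neg (by simpa using hyx), ih hL.2 hx]

/-- `x{a}` encodes `true` by the span `[p, p+1⟩`, `x{ε}·a` encodes `false` by `[p, p⟩`. -/
def choiceSpan (p : ℕ) (b : Bool) : Span := if b then (p, p + 1) else (p, p)

lemma choiceSpan_injective (p : ℕ) : Function.Injective (choiceSpan p) := by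
  intro b b' h
  cases b <;> cases b' <;> simp_all [choiceSpan]

def IsLetterGadget (a : Sig) (ρ : RGX Sig) (k : ℕ) (S : Bool → Prop) : Prop :=
  ∀ N i j μ, RMatch ρ (List.replicate N a) i j μ ↔
    1 ≤ i ∧ i ≤ N ∧ j = i + 1 ∧ ∃ b, S b ∧ μ = minsert k (choiceSpan i b) emptyMapping

section Gadgets

variable {a : Sig} {N i j k : ℕ} {μ : VMapping}

lemma rmatch_letter_replicate_iff :
    RMatch (.letter a) (List.replicate N a) i j μ ↔
      1 ≤ i ∧ i ≤ N ∧ j = i + 1 ∧ μ = emptyMapping := by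
  constructor
  · intro h
    cases h with
    | letter h1 h2 =>
        have := (List.getElem?_eq_some_iff.mp h2).1
        simp only [List.length_replicate] at this
        exact ⟨h1, by omega, rfl, rfl⟩
  · rintro ⟨h1, h2, rfl, rfl⟩
    exact .letter h1 (by rw [List.getElem?_replicate, if_pos (by omega)])

lemma rmatch_bind_letter_iff :
    RMatch (.bind k (.letter a)) (List.replicate N a) i j μ ↔
      1 ≤ i ∧ i ≤ N ∧ j = i + 1 ∧ μ = minsert k (choiceSpan i true) emptyMapping := by
  simp only [rmatch_bind_iff, rmatch_letter_replicate_iff, choiceSpan, if_true]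
  constructor
  · rintro ⟨_, ⟨h1, h2, rfl, rfl⟩, -, rfl⟩
    exact ⟨h1, h2, rfl, rfl⟩
  · rintro ⟨h1, h2, rfl, rfl⟩
    exact ⟨_, ⟨h1, h2, rfl, rfl⟩, rfl, rfl⟩

lemma rmatch_bind_eps_letter_iff :
    RMatch (.concat (.bind k .eps) (.letter a)) (List.replicate N a) i j μ ↔
      1 ≤ i ∧ i ≤ N ∧ j = i + 1 ∧ μ = minsert k (choiceSpan i false) emptyMapping := by
  simp only [rmatch_concat_iff, rmatch_bind_iff, rmatch_eps_iff, rmatch_letter_replicate_iff,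
    choiceSpan, Bool.false_eq_true, if_false]
  constructor
  · rintro ⟨_, _, _, ⟨_, ⟨-, -, rfl, rfl⟩, -, rfl⟩, ⟨h1, h2, rfl, rfl⟩, -, rfl⟩
    exact ⟨h1, h2, rfl, munion_emptyMapping _⟩
  · rintro ⟨h1, h2, rfl, rfl⟩
    have hi : i ≤ (List.replicate N a).length + 1 := by
      rw [List.length_replicate]
      omega
    exact ⟨i, _, _, ⟨_, ⟨h1, hi, rfl, rfl⟩, rfl, rfl⟩, ⟨h1, h2, rfl, rfl⟩,
      fun _ => .inr rfl, (munion_emptyMapping _).symm⟩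

lemma isLetterGadget_betaS1 : IsLetterGadget a (betaS1 a k) k fun _ => True := by
  intro N i j μ
  simp only [betaS1, rmatch_union_iff, rmatch_bind_eps_letter_iff, rmatch_bind_letter_iff,
    true_and, Bool.exists_bool]
  tauto

lemma isLetterGadget_deltaS1 (pos : Bool) :
    IsLetterGadget a (deltaS1 a k pos) k (· = !pos) := by
  intro N i j μ
  cases pos <;>
    simp [deltaS1, rmatch_bind_eps_letter_iff, rmatch_bind_letter_iff]

end Gadgets

/-- The encoding `μ_τ`; spans are 1-based, so the variable `x` sits at the letter `x + 1`. -/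
def assignmentMapping (s n : ℕ) (τ : ℕ → Bool) : VMapping := fun x =>
  if s ≤ x ∧ x < s + n then some (choiceSpan (x + 1) (τ x)) else none

section Chains

variable {s n : ℕ} {τ τ' : ℕ → Bool}

lemma assignmentMapping_zero : assignmentMapping s 0 τ = emptyMapping := by
  funext x
  simp only [assignmentMapping, emptyMapping]
  rw [if_neg (by omega)]

lemma assignmentMapping_succ :
    assignmentMapping s (n + 1) τ =
      munion (minsert s (choiceSpan (s + 1) (τ s)) emptyMapping)
        (assignmentMapping (s + 1) n τ) := by
  funext x
  simp only [assignmentMapping, munion, minsert, emptyMapping]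
  by_cases hx : x = s
  · simp [hx]
  · simp only [hx, if_false]
    congr 1
    apply propext
    omega

lemma disjointDom_minsert_assignmentMapping (v : Span) :
    DisjointDom (minsert s v emptyMapping) (assignmentMapping (s + 1) n τ) := by
  intro x
  by_cases hx : x = s
  · right
    simp only [assignmentMapping]
    rw [if_neg (by omega)]
  · left
    simp [minsert, hx, emptyMapping]

lemma assignmentMapping_congr (h : ∀ t, s ≤ t → t < s + n → τ t = τ' t) :
    assignmentMapping s n τ = assignmentMapping s n τ' := by
  funext x
  simp only [assignmentMapping]
  split_ifs with hx
  · rw [h x hx.1 hx.2]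
  · rfl

lemma compatible_assignmentMapping_iff :
    Compatible (assignmentMapping s n τ) (assignmentMapping s n τ') ↔
      ∀ t, s ≤ t → t < s + n → τ t = τ' t := by
  constructor
  · intro h t h1 h2
    refine choiceSpan_injective (t + 1) (h t _ _ ?_ ?_) <;>
      simp only [assignmentMapping] <;> rw [if_pos ⟨h1, h2⟩]
  · intro h
    rw [assignmentMapping_congr h]
    exact compatible_refl _

variable {f : ℕ → RGX Sig}

lemma vars_concatList_range' (hv : ∀ k, (f k).vars = {k}) :
    (concatList ((List.range' s n).map f)).vars = Finset.Ico s (s + n) := by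
  induction n generalizing s with
  | zero => simp [concatList, RGX.vars]
  | succ n ih =>
      rw [List.range'_succ, List.map_cons, vars_concatList_cons, hv, ih]
      ext x
      simp only [Finset.mem_union, Finset.mem_singleton, Finset.mem_Ico]
      omega

lemma functionalFor_concatList_range' (hf : ∀ k, FunctionalFor (f k) {k}) :
    FunctionalFor (concatList ((List.range' s n).map f)) (Finset.Ico s (s + n)) := by
  induction n generalizing s with
  | zero => simpa [concatList] using FunctionalFor.word RGX.IsWord.eps
  | succ n ih =>
      rw [List.range'_succ, List.map_cons]
      convert (hf s).concatList_cons (ih (s := s + 1)) (by simp) using 1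
      ext x
      simp only [Finset.mem_union, Finset.mem_singleton, Finset.mem_Ico]
      omega

lemma vars_concatList_range (hv : ∀ k, (f k).vars = {k}) :
    (concatList ((List.range n).map f)).vars = Finset.range n := by
  rw [List.range_eq_range', vars_concatList_range' hv, zero_add, Finset.range_eq_Ico]

lemma functionalFor_concatList_range (hf : ∀ k, FunctionalFor (f k) {k}) :
    FunctionalFor (concatList ((List.range n).map f)) (Finset.range n) := by
  have h := functionalFor_concatList_range' (s := 0) (n := n) hf
  rwa [zero_add, ← Finset.range_eq_Ico, ← List.range_eq_range'] at h

lemma rmatch_concatList_range'_iff {a : Sig} {S : ℕ → Bool → Prop}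
    (hg : ∀ k, IsLetterGadget a (f k) k (S k)) {N j : ℕ} {μ : VMapping} :
    RMatch (concatList ((List.range' s n).map f)) (List.replicate N a) (s + 1) j μ ↔
      j = s + n + 1 ∧ s + n ≤ N ∧
        ∃ τ : ℕ → Bool, (∀ t, s ≤ t → t < s + n → S t (τ t)) ∧ μ = assignmentMapping s n τ := by
  induction n generalizing s j μ with
  | zero =>
      simp only [List.range'_zero, List.map_nil, concatList, rmatch_eps_iff,
        List.length_replicate, assignmentMapping_zero]
      constructor
      · rintro ⟨-, h, rfl, rfl⟩
        exact ⟨rfl, by omega, fun _ => false, fun t h1 h2 => by omega, rfl⟩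
      · rintro ⟨rfl, h, -, -, rfl⟩
        exact ⟨by omega, by omega, rfl, rfl⟩
  | succ n ih =>
      rw [List.range'_succ, List.map_cons, rmatch_concatList_cons]
      constructor
      · rintro ⟨k, μ₁, μ₂, h₁, h₂, -, rfl⟩
        obtain ⟨-, -, rfl, b, hb, rfl⟩ := (hg s N _ _ _).mp h₁
        obtain ⟨rfl, hN, τ, hτ, rfl⟩ := ih.mp h₂
        refine ⟨by omega, by omega, Function.update τ s b, fun t h1 h2 => ?_, ?_⟩
        · rcases eq_or_ne t s with rfl | hts
          · rwa [Function.update_self]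
          · rw [Function.update_of_ne hts]
            exact hτ t (by omega) (by omega)
        · rw [assignmentMapping_succ, Function.update_self,
            assignmentMapping_congr fun t h _ => Function.update_of_ne (by omega) b τ]
      · rintro ⟨rfl, hN, τ, hτ, rfl⟩
        rw [assignmentMapping_succ]
        refine ⟨s + 1 + 1, _, _, (hg s N _ _ _).mpr ⟨by omega, by omega, rfl, τ s,
          hτ s le_rfl (by omega), rfl⟩, ih.mpr ⟨by omega, by omega, τ,
          fun t h1 h2 => hτ t (by omega) (by omega), rfl⟩,
          disjointDom_minsert_assignmentMapping _, rfl⟩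

lemma mem_rgxSem_concatList_range_iff {a : Sig} {S : ℕ → Bool → Prop} {μ : VMapping}
    (hg : ∀ k, IsLetterGadget a (f k) k (S k)) :
    μ ∈ rgxSem (concatList ((List.range n).map f)) (List.replicate n a) ↔
      ∃ τ : ℕ → Bool, (∀ t < n, S t (τ t)) ∧ μ = assignmentMapping 0 n τ := by
  have h := rmatch_concatList_range'_iff (s := 0) (n := n) hg (N := n) (j := n + 1) (μ := μ)
  simp only [zero_add, le_refl, true_and, zero_le, forall_const] at h
  rw [rgxSem, Set.mem_ofPred_eq, List.length_replicate, List.range_eq_range', h]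

end Chains

section Reduction

variable {a : Sig} {n k t : ℕ}

lemma vars_betaS1 : (betaS1 a k).vars = {k} := by
  simp [betaS1, RGX.vars]

lemma vars_deltaS1 (pos : Bool) : (deltaS1 a k pos).vars = {k} := by
  cases pos <;> simp [deltaS1, RGX.vars]

lemma functionalFor_bind_eps_letter : FunctionalFor (.concat (.bind k .eps) (.letter a)) {k} :=
  .concat {k} subset_rfl (.bind_singleton .eps)
    (by rw [Finset.sdiff_self]; exact .word (.letter a))

lemma functionalFor_betaS1 : FunctionalFor (betaS1 a k) {k} :=
  .union functionalFor_bind_eps_letter (.bind_singleton (.letter a))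

lemma functionalFor_deltaS1 (pos : Bool) : FunctionalFor (deltaS1 a k pos) {k} := by
  cases pos
  exacts [.bind_singleton (.letter a), functionalFor_bind_eps_letter]

def clauseBlock (a : Sig) (c : Clause3 n) (t : ℕ) : RGX Sig :=
  match (litsOf c).find? (fun l => decide ((l.1 : ℕ) = t)) with
  | some l => deltaS1 a t l.2
  | none => betaS1 a t

def clauseAllows (c : Clause3 n) (t : ℕ) (b : Bool) : Prop :=
  ∀ l, (litsOf c).find? (fun l => decide ((l.1 : ℕ) = t)) = some l → b = !l.2

variable {c : Clause3 n}

lemma vars_clauseBlock : (clauseBlock a c t).vars = {t} := by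
  unfold clauseBlock
  split
  exacts [vars_deltaS1 _, vars_betaS1]

lemma functionalFor_clauseBlock : FunctionalFor (clauseBlock a c t) {t} := by
  unfold clauseBlock
  split
  exacts [functionalFor_deltaS1 _, functionalFor_betaS1]

lemma isLetterGadget_clauseBlock : IsLetterGadget a (clauseBlock a c t) t (clauseAllows c t) := by
  unfold clauseBlock clauseAllows
  split
  next l hl =>
    convert isLetterGadget_deltaS1 (a := a) (k := t) l.2 using 2
    simp [hl]
  next hl =>
    convert isLetterGadget_betaS1 using 2
    simp [hl]

lemma forall_clauseAllows_iff (hc : ((litsOf c).map Prod.fst).Nodup) (τ : ℕ → Bool) :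
    (∀ t < n, clauseAllows c t (τ t)) ↔ ¬ clauseSat (fun i => τ i) c := by
  constructor
  · rintro hall ⟨l, hl, hsat⟩
    have hc' : ((litsOf c).map fun l => (l.1 : ℕ)).Nodup := by
      simpa only [List.map_map, Function.comp_def] using hc.map Fin.val_injective
    have := hall l.1 l.1.isLt l (List.find?_eq_some_of_nodup_map hc' hl)
    rw [show τ l.1 = l.2 from hsat, Bool.eq_not_self] at this
    exact this
  · intro hns t _ l hl
    obtain rfl : (l.1 : ℕ) = t := by simpa using List.find?_some hl
    exact Bool.eq_not_iff.mpr fun h => hns ⟨l, List.mem_of_find?_eq_some hl, h⟩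

end Reduction

section Semantics

variable {a : Sig} {n m : ℕ} {μ : VMapping}

lemma gamma1S1_eq : gamma1S1 a n = concatList ((List.range n).map (betaS1 a)) := by
  rw [gamma1S1, List.ofFn_eq_map, ← List.map_coe_finRange_eq_range, List.map_map]
  rfl

lemma gamma2iS1_eq (c : Clause3 n) :
    gamma2iS1 a c = concatList ((List.range n).map (clauseBlock a c)) := by
  rw [gamma2iS1, List.ofFn_eq_map, ← List.map_coe_finRange_eq_range, List.map_map]
  congr 2
  funext i
  simp only [Function.comp, clauseBlock, Fin.val_inj]

lemma mem_rgxSem_gamma1S1 :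
    μ ∈ rgxSem (gamma1S1 a n) (List.replicate n a) ↔
      ∃ τ : ℕ → Bool, μ = assignmentMapping 0 n τ := by
  simp [gamma1S1_eq, mem_rgxSem_concatList_range_iff fun _ => isLetterGadget_betaS1]

lemma mem_rgxSem_gamma2iS1 {c : Clause3 n} (hc : ((litsOf c).map Prod.fst).Nodup) :
    μ ∈ rgxSem (gamma2iS1 a c) (List.replicate n a) ↔
      ∃ τ : ℕ → Bool, ¬ clauseSat (fun i => τ i) c ∧ μ = assignmentMapping 0 n τ := by
  simp only [gamma2iS1_eq, mem_rgxSem_concatList_range_iff fun _ => isLetterGadget_clauseBlock,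
    forall_clauseAllows_iff hc]

lemma mem_rgxSem_gamma2S1 {φ : Fin m → Clause3 n}
    (hφ : ∀ j, ((litsOf (φ j)).map Prod.fst).Nodup) :
    μ ∈ rgxSem (gamma2S1 a φ) (List.replicate n a) ↔
      ∃ j, ∃ τ : ℕ → Bool, ¬ clauseSat (fun i => τ i) (φ j) ∧ μ = assignmentMapping 0 n τ := by
  rw [gamma2S1, mem_rgxSem_disjList]
  simp only [List.mem_ofFn, exists_exists_eq_and]
  exact exists_congr fun j => mem_rgxSem_gamma2iS1 (hφ j)

lemma vars_gamma1S1 : (gamma1S1 a n).vars = Finset.range n := by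
  rw [gamma1S1_eq, vars_concatList_range fun _ => vars_betaS1]

lemma functionalFor_gamma1S1 : FunctionalFor (gamma1S1 a n) (Finset.range n) := by
  rw [gamma1S1_eq]
  exact functionalFor_concatList_range fun _ => functionalFor_betaS1

lemma vars_gamma2iS1 (c : Clause3 n) : (gamma2iS1 a c).vars = Finset.range n := by
  rw [gamma2iS1_eq, vars_concatList_range fun _ => vars_clauseBlock]

lemma functionalFor_gamma2iS1 (c : Clause3 n) :
    FunctionalFor (gamma2iS1 a c) (Finset.range n) := by
  rw [gamma2iS1_eq]
  exact functionalFor_concatList_range fun _ => functionalFor_clauseBlock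

variable {φ : Fin m → Clause3 n}

lemma vars_gamma2S1 (hm : 0 < m) : (gamma2S1 a φ).vars = Finset.range n :=
  vars_disjList (by simpa [List.ofFn_eq_nil_iff] using hm.ne')
    (List.forall_mem_ofFn_iff.mpr fun _ => vars_gamma2iS1 _)

lemma functionalFor_gamma2S1 (hm : 0 < m) : FunctionalFor (gamma2S1 a φ) (Finset.range n) :=
  .disjList (by simpa [List.ofFn_eq_nil_iff] using hm.ne')
    (List.forall_mem_ofFn_iff.mpr fun _ => functionalFor_gamma2iS1 _)

lemma diffSet_gamma1S1_gamma2S1_nonempty_iff (hφ : ∀ j, ((litsOf (φ j)).map Prod.fst).Nodup) :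
    (diffSet (rgxSem (gamma1S1 a n) (List.replicate n a))
      (rgxSem (gamma2S1 a φ) (List.replicate n a))).Nonempty ↔ Sat3 φ := by
  constructor
  · rintro ⟨μ, hμ₁, hμ₂⟩
    obtain ⟨τ, rfl⟩ := mem_rgxSem_gamma1S1.mp hμ₁
    refine ⟨fun i => τ i, fun j => by_contra fun hns => ?_⟩
    exact hμ₂ _ ((mem_rgxSem_gamma2S1 hφ).mpr ⟨j, τ, hns, rfl⟩) (compatible_refl _)
  · rintro ⟨τ₀, hτ₀⟩
    obtain ⟨τ, rfl⟩ : ∃ τ : ℕ → Bool, (fun i : Fin n => τ i) = τ₀ :=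
      ⟨fun t => if h : t < n then τ₀ ⟨t, h⟩ else false, by simp⟩
    refine ⟨_, mem_rgxSem_gamma1S1.mpr ⟨τ, rfl⟩, fun μ hμ hcompat => ?_⟩
    obtain ⟨j, σ, hns, rfl⟩ := (mem_rgxSem_gamma2S1 hφ).mp hμ
    have hagree := compatible_assignmentMapping_iff.mp hcompat
    have : (fun i : Fin n => σ i) = fun i : Fin n => τ i :=
      funext fun i => (hagree i (Nat.zero_le _) (by simp)).symm
    exact hns (this ▸ hτ₀ j)

end Semantics

theorem statement1 (a : Sig) (n m : ℕ) (hm : 0 < m) (φ : Fin m → Clause3 n)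
    (hdistinct : ∀ j : Fin m, ((litsOf (φ j)).map Prod.fst).Nodup) :
    (gamma1S1 a n).Functional ∧ (gamma2S1 a φ).Functional ∧
    (gamma1S1 a n).vars = (Finset.univ.image fun i : Fin n => (i : ℕ)) ∧
    (gamma2S1 a φ).vars = (Finset.univ.image fun i : Fin n => (i : ℕ)) ∧
    ((diffSet (rgxSem (gamma1S1 a n) (List.replicate n a))
              (rgxSem (gamma2S1 a φ) (List.replicate n a))).Nonempty ↔ Sat3 φ) := by
  rw [RGX.Functional, RGX.Functional, vars_gamma1S1, vars_gamma2S1 hm, Finset.image_fin_univ]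
  exact ⟨functionalFor_gamma1S1, functionalFor_gamma2S1 hm, rfl, rfl,
    diffSet_gamma1S1_gamma2S1_nonempty_iff hdistinct⟩

end Spanners
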